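/- Let n ∈ ℕ, and for each m ∈ {1,…,n} let ω_m, q_m ∈ ℝ³ with ‖ω_m‖ = 1 and ξ_m := (−ω_m × q_m, ω_m) ∈ ℝ⁶. Define G(θ) := exp(θ₁ ξ̂₁) ⋯ exp(θ_n ξ̂_n) for θ ∈ ℝ^n. Then (i) every entry of G(θ) is a finite real-linear combination of the functions θ ↦ Π_{m=1}^{n} sin^{a_m}(θ_m) cos^{b_m}(θ_m) with nonnegative integers a_m, b_m satisfying a_m + b_m ≤ 1 for every m; and (ii) for every constant 4×4 real matrix X, every entry of θ ↦ G(θ)ᵀ X G(θ) is a finite real-linear combination of the functions θ ↦ Π_{m=1}^{n} sin^{a_m}(θ_m) cos^{b_m}(θ_m) with a_m + b_m ≤ 2 for every m. -/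

import Mathlib

/-!
A zero-pitch twist `ξ̂ = se3hat (-(ω × q)) ω` with `‖ω‖ = 1` satisfies `ξ̂³ = -ξ̂`: on the rotation
block this is `ω × (ω × (ω × x)) = -(ω × x)`, and on the translation column `ω × (ω × v) = -v`
because `v ⊥ ω`. Splitting the exponential series into even and odd terms then gives Rodrigues'
formula `exp (t ξ̂) = 1 + sin t ξ̂ + (1 - cos t) ξ̂²`, so every entry of the `m`-th factor of `G(θ)`
is a combination of `1, sin θ_m, cos θ_m`. Entries of products are sums of products of entries,
and products of trigonometric monomials add their per-joint degrees; each joint occurs once in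
`G(θ)` and twice in `G(θ)ᵀ X G(θ)`.
-/

open Matrix

/-- The hat map: the unique 3×3 skew-symmetric matrix `ω̂` with `ω̂ x = ω × x` for all `x`. -/
noncomputable def hat (ω : Fin 3 → ℝ) : Matrix (Fin 3) (Fin 3) ℝ :=
  !![0, -ω 2, ω 1; ω 2, 0, -ω 0; -ω 1, ω 0, 0]

/-- The se(3) hat map of a twist `ξ = (v, ω)`: the 4×4 matrix with upper-left block `ω̂`,
upper-right block `v` and zero bottom row. -/
noncomputable def se3hat (v ω : Fin 3 → ℝ) : Matrix (Fin 3 ⊕ Fin 1) (Fin 3 ⊕ Fin 1) ℝ :=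
  Matrix.fromBlocks (hat ω) (Matrix.of fun i (_ : Fin 1) => v i) 0 0

/-- The trigonometric monomials `θ ↦ Π_m sin^{a_m}(θ_m) cos^{b_m}(θ_m)` with
per-joint degree `a_m + b_m ≤ d`. -/
def trigMonomials (n d : ℕ) : Set ((Fin n → ℝ) → ℝ) :=
  {f | ∃ a b : Fin n → ℕ, (∀ m, a m + b m ≤ d) ∧
    f = fun θ => ∏ m : Fin n, Real.sin (θ m) ^ a m * Real.cos (θ m) ^ b m}

open Real
open scoped Pointwise

theorem cross_cross_self_of_dotProduct_eq_zero {ω y : Fin 3 → ℝ} (hω : ω ⬝ᵥ ω = 1)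
    (hy : ω ⬝ᵥ y = 0) : ω ⨯₃ (ω ⨯₃ y) = -y := by
  rw [cross_cross_eq_smul_sub_smul', hy, hω, zero_smul, one_smul, zero_sub]

theorem hat_mulVec (ω x : Fin 3 → ℝ) : hat ω *ᵥ x = ω ⨯₃ x := by
  ext i
  fin_cases i <;> simp [hat, cross_apply, mulVec, dotProduct, Fin.sum_univ_three] <;> ring

theorem hat_pow_three {ω : Fin 3 → ℝ} (hω : ω ⬝ᵥ ω = 1) : hat ω ^ 3 = -hat ω := by
  refine ext_iff_mulVec.2 fun x => ?_
  rw [pow_three, ← mulVec_mulVec, ← mulVec_mulVec, neg_mulVec, hat_mulVec, hat_mulVec,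
    hat_mulVec, cross_cross_self_of_dotProduct_eq_zero hω (dot_self_cross ω x)]

theorem se3hat_pow_three {v ω : Fin 3 → ℝ} (hω : ω ⬝ᵥ ω = 1) (hv : ω ⬝ᵥ v = 0) :
    se3hat v ω ^ 3 = -se3hat v ω := by
  have hcol : hat ω * (hat ω * replicateCol (Fin 1) v) = -replicateCol (Fin 1) v := by
    rw [← replicateCol_mulVec, ← replicateCol_mulVec, hat_mulVec, hat_mulVec,
      cross_cross_self_of_dotProduct_eq_zero hω hv]
    rfl
  have hsq : hat ω * (hat ω * hat ω) = -hat ω := by rw [← pow_three, hat_pow_three hω]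
  change fromBlocks (hat ω) (replicateCol (Fin 1) v) 0 0 ^ 3 =
    -fromBlocks (hat ω) (replicateCol (Fin 1) v) 0 0
  simp only [pow_three, fromBlocks_multiply, Matrix.mul_zero, Matrix.zero_mul, add_zero,
    hsq, hcol, fromBlocks_neg, neg_zero]

theorem Real.hasSum_one_sub_cos (t : ℝ) :
    HasSum (fun k : ℕ => (-1) ^ k * t ^ (2 * k + 2) / (2 * k + 2).factorial) (1 - Real.cos t) := by
  have h := ((hasSum_nat_add_iff' 1).2 (Real.hasSum_cos t)).neg
  simp only [Finset.range_one, Finset.sum_singleton, pow_zero, mul_zero, Nat.factorial_zero,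
    Nat.cast_one, div_one, one_mul, neg_sub] at h
  refine h.congr_fun fun k => ?_
  rw [pow_succ, mul_add_one]
  ring

section PowThreeEqNeg

variable {R : Type*} [Ring R] {a : R}

theorem pow_two_mul_add_one_of_pow_three_eq_neg (ha : a ^ 3 = -a) (k : ℕ) :
    a ^ (2 * k + 1) = (-1) ^ k * a := by
  induction k with
  | zero => simp
  | succ k ih =>
    rw [show 2 * (k + 1) + 1 = 2 + (2 * k + 1) by ring, pow_add, ih, ← mul_assoc,
      (Commute.neg_one_right _).pow_right k |>.eq, mul_assoc, ← pow_succ, ha, pow_succ]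
    noncomm_ring

theorem pow_two_mul_add_two_of_pow_three_eq_neg (ha : a ^ 3 = -a) (k : ℕ) :
    a ^ (2 * k + 2) = (-1) ^ k * a ^ 2 := by
  rw [pow_succ, pow_two_mul_add_one_of_pow_three_eq_neg ha, mul_assoc, ← pow_two]

end PowThreeEqNeg

theorem NormedSpace.exp_smul_of_pow_three_eq_neg {𝔸 : Type*} [NormedRing 𝔸] [NormedAlgebra ℝ 𝔸]
    [CompleteSpace 𝔸] {A : 𝔸} (hA : A ^ 3 = -A) (t : ℝ) :
    NormedSpace.exp (t • A) = 1 + Real.sin t • A + (1 - Real.cos t) • A ^ 2 := by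
  have hsign : ∀ (k : ℕ) (B : 𝔸), (-1 : 𝔸) ^ k * B = ((-1 : ℝ) ^ k) • B := fun k B => by
    rw [Algebra.smul_def, map_pow, map_neg, map_one]
  -- `g` is kept opaque: unifying against the unfolded terms makes Lean evaluate real powers.
  obtain ⟨g, hg⟩ : ∃ g : ℕ → 𝔸, g = fun n => (t ^ n / n.factorial) • A ^ n := ⟨_, rfl⟩
  have hexp : HasSum g (NormedSpace.exp (t • A)) := by
    simpa only [hg, smul_pow, smul_smul, div_eq_inv_mul] using
      NormedSpace.exp_series_hasSum_exp' (𝕂 := ℝ) (t • A)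
  have hodd : HasSum (fun k => g (2 * k + 1)) (Real.sin t • A) := by
    refine ((Real.hasSum_sin t).smul_const A).congr_fun fun k => ?_
    simp only [hg, pow_two_mul_add_one_of_pow_three_eq_neg hA, hsign, smul_smul]
    congr 1; ring
  have heven : HasSum (fun k => g (2 * k + 1 + 1)) ((1 - Real.cos t) • A ^ 2) := by
    refine ((Real.hasSum_one_sub_cos t).smul_const (A ^ 2)).congr_fun fun k => ?_
    simp only [hg, show 2 * k + 1 + 1 = 2 * k + 2 from rfl,
      pow_two_mul_add_two_of_pow_three_eq_neg hA, hsign, smul_smul]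
    congr 1; ring
  have hsum := (HasSum.even_add_odd (f := fun n => g (n + 1)) hodd heven).zero_add
  rw [hexp.unique hsum, hg, add_assoc]
  simp

theorem Matrix.exp_smul_of_pow_three_eq_neg {N : Type*} [Fintype N] [DecidableEq N]
    {A : Matrix N N ℝ} (hA : A ^ 3 = -A) (t : ℝ) :
    NormedSpace.exp (t • A) = 1 + Real.sin t • A + (1 - Real.cos t) • A ^ 2 :=
  -- `NormedSpace.exp` only depends on the topology, which every matrix norm induces.
  letI : NormedRing (Matrix N N ℝ) := Matrix.linftyOpNormedRing
  letI : NormedAlgebra ℝ (Matrix N N ℝ) := Matrix.linftyOpNormedAlgebra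
  NormedSpace.exp_smul_of_pow_three_eq_neg hA t

section TrigMonomials

variable {ι : Type*} [Fintype ι]

def trigMonomialsLE (d : ι → ℕ) : Set ((ι → ℝ) → ℝ) :=
  {f | ∃ a b : ι → ℕ, (∀ m, a m + b m ≤ d m) ∧
    f = fun θ => ∏ m, sin (θ m) ^ a m * cos (θ m) ^ b m}

theorem trigMonomialsLE_const (n d : ℕ) :
    trigMonomialsLE (fun _ : Fin n => d) = trigMonomials n d :=
  rfl

theorem one_mem_trigMonomialsLE (d : ι → ℕ) : 1 ∈ trigMonomialsLE d :=
  ⟨0, 0, fun _ => Nat.zero_le _, by ext; simp⟩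

theorem sin_mem_trigMonomialsLE_single [DecidableEq ι] (j : ι) :
    (fun θ : ι → ℝ => sin (θ j)) ∈ trigMonomialsLE (Pi.single j 1) := by
  refine ⟨Pi.single j 1, 0, fun _ => by simp, funext fun θ => ?_⟩
  rw [Finset.prod_eq_single j (fun m _ hm => by simp [Pi.single_eq_of_ne hm]) (by simp)]
  simp

theorem cos_mem_trigMonomialsLE_single [DecidableEq ι] (j : ι) :
    (fun θ : ι → ℝ => cos (θ j)) ∈ trigMonomialsLE (Pi.single j 1) := by
  refine ⟨0, Pi.single j 1, fun _ => by simp, funext fun θ => ?_⟩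
  rw [Finset.prod_eq_single j (fun m _ hm => by simp [Pi.single_eq_of_ne hm]) (by simp)]
  simp

theorem trigMonomialsLE_mul_subset (d d' : ι → ℕ) :
    trigMonomialsLE d * trigMonomialsLE d' ⊆ trigMonomialsLE (d + d') := by
  rintro _ ⟨_, ⟨a, b, hab, rfl⟩, _, ⟨a', b', hab', rfl⟩, rfl⟩
  refine ⟨a + a', b + b', fun m =>
    (add_add_add_comm _ _ _ _).trans_le (add_le_add (hab m) (hab' m)), funext fun θ => ?_⟩
  simp only [Pi.mul_apply, Pi.add_apply, pow_add, ← Finset.prod_mul_distrib]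
  exact Finset.prod_congr rfl fun _ _ => by ring

theorem const_mem_span_trigMonomialsLE (d : ι → ℕ) (c : ℝ) :
    (fun _ => c) ∈ Submodule.span ℝ (trigMonomialsLE d) := by
  convert Submodule.smul_mem _ c (Submodule.subset_span (one_mem_trigMonomialsLE d)) using 1
  ext; simp

theorem mul_mem_span_trigMonomialsLE {d d' : ι → ℕ} {f g : (ι → ℝ) → ℝ}
    (hf : f ∈ Submodule.span ℝ (trigMonomialsLE d))
    (hg : g ∈ Submodule.span ℝ (trigMonomialsLE d')) :
    f * g ∈ Submodule.span ℝ (trigMonomialsLE (d + d')) := by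
  have hfg := Submodule.mul_mem_mul hf hg
  rw [Submodule.span_mul_span] at hfg
  exact Submodule.span_mono (trigMonomialsLE_mul_subset d d') hfg

variable {N : Type*} [Fintype N] [DecidableEq N]

theorem exp_smul_apply_mem_span_trigMonomialsLE [DecidableEq ι] {A : Matrix N N ℝ}
    (hA : A ^ 3 = -A) (j : ι) (r c : N) :
    (fun θ : ι → ℝ => NormedSpace.exp (θ j • A) r c) ∈
      Submodule.span ℝ (trigMonomialsLE (Pi.single j 1)) := by
  have hentry : (fun θ : ι → ℝ => NormedSpace.exp (θ j • A) r c) =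
      (fun _ => (1 + A ^ 2 : Matrix N N ℝ) r c) + A r c • (fun θ => sin (θ j)) -
        (A ^ 2) r c • (fun θ => cos (θ j)) := by
    ext θ
    simp only [Matrix.exp_smul_of_pow_three_eq_neg hA, Matrix.add_apply, Matrix.smul_apply,
      smul_eq_mul, Pi.add_apply, Pi.sub_apply, Pi.smul_apply]
    ring
  rw [hentry]
  exact sub_mem (add_mem (const_mem_span_trigMonomialsLE _ _)
    (Submodule.smul_mem _ _ (Submodule.subset_span (sin_mem_trigMonomialsLE_single j))))
    (Submodule.smul_mem _ _ (Submodule.subset_span (cos_mem_trigMonomialsLE_single j)))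

theorem list_prod_apply_mem_span_trigMonomialsLE [DecidableEq ι]
    (E : ι → (ι → ℝ) → Matrix N N ℝ)
    (hE : ∀ j r c, (fun θ => E j θ r c) ∈ Submodule.span ℝ (trigMonomialsLE (Pi.single j 1)))
    (l : List ι) (r c : N) :
    (fun θ => (l.map fun j => E j θ).prod r c) ∈
      Submodule.span ℝ (trigMonomialsLE fun j => l.count j) := by
  induction l generalizing r c with
  | nil => exact const_mem_span_trigMonomialsLE _ _
  | cons m l ih =>
    have hentry : (fun θ => ((m :: l).map fun j => E j θ).prod r c) =
        ∑ k, (fun θ => E m θ r k) * fun θ => (l.map fun j => E j θ).prod k c := by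
      ext θ
      simp [Matrix.mul_apply]
    have hcount : (fun j => (m :: l).count j) = Pi.single m 1 + fun j => l.count j := by
      ext j
      by_cases h : m = j <;> simp [h, add_comm]
    rw [hentry, hcount]
    exact Submodule.sum_mem _ fun k _ => mul_mem_span_trigMonomialsLE (hE m r k) (ih k c)

theorem transpose_mul_mul_apply_mem_span_trigMonomialsLE {M M' N' : Type*} [Fintype M]
    [Fintype M'] {d d' : ι → ℕ} {F : (ι → ℝ) → Matrix M N' ℝ} {G : (ι → ℝ) → Matrix M' N' ℝ}
    (hF : ∀ r c, (fun θ => F θ r c) ∈ Submodule.span ℝ (trigMonomialsLE d))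
    (hG : ∀ r c, (fun θ => G θ r c) ∈ Submodule.span ℝ (trigMonomialsLE d'))
    (X : Matrix M M' ℝ) (r c : N') :
    (fun θ => ((F θ)ᵀ * X * G θ) r c) ∈ Submodule.span ℝ (trigMonomialsLE (d + d')) := by
  have hentry : (fun θ => ((F θ)ᵀ * X * G θ) r c) =
      ∑ j, ∑ k, X j k • ((fun θ => F θ j r) * fun θ => G θ k c) := by
    ext θ
    simp only [Matrix.mul_apply, transpose_apply, Finset.sum_mul, Finset.sum_apply,
      Pi.smul_apply, Pi.mul_apply, smul_eq_mul]
    rw [Finset.sum_comm]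
    exact Finset.sum_congr rfl fun _ _ => Finset.sum_congr rfl fun _ _ => by ring
  rw [hentry]
  exact Submodule.sum_mem _ fun j _ => Submodule.sum_mem _ fun k _ =>
    Submodule.smul_mem _ _ (mul_mem_span_trigMonomialsLE (hF j r) (hG k c))

end TrigMonomials

/-- **Trigonometric decomposition lemma.** For a chain of `n` zero-pitch revolute joints
with unit axes `ω_m` through points `q_m`, every entry of
`G(θ) = exp(θ₁ ξ̂₁) ⋯ exp(θ_n ξ̂_n)` is a real-linear combination of trigonometric
monomials of per-joint degree at most 1, and every entry of `G(θ)ᵀ X G(θ)` is a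
real-linear combination of trigonometric monomials of per-joint degree at most 2. -/
theorem poe_trig_decomposition (n : ℕ) (ω : Fin n → EuclideanSpace ℝ (Fin 3))
    (q : Fin n → Fin 3 → ℝ) (hω : ∀ m, ‖ω m‖ = 1)
    (G : (Fin n → ℝ) → Matrix (Fin 3 ⊕ Fin 1) (Fin 3 ⊕ Fin 1) ℝ)
    (hG : G = fun θ => (((List.finRange n).map fun m =>
        NormedSpace.exp (θ m • se3hat (-(crossProduct (ω m) (q m))) (ω m))).prod)) :
    (∀ r c, (fun θ => G θ r c) ∈ Submodule.span ℝ (trigMonomials n 1)) ∧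
    (∀ X : Matrix (Fin 3 ⊕ Fin 1) (Fin 3 ⊕ Fin 1) ℝ, ∀ r c,
      (fun θ => ((G θ)ᵀ * X * G θ) r c) ∈ Submodule.span ℝ (trigMonomials n 2)) := by
  subst hG
  rw [← trigMonomialsLE_const, ← trigMonomialsLE_const]
  have hunit : ∀ m, (ω m).ofLp ⬝ᵥ (ω m).ofLp = 1 := fun m => by
    have h := real_inner_self_eq_norm_sq (ω m)
    rwa [EuclideanSpace.inner_eq_star_dotProduct, star_trivial, hω m, one_pow] at h
  have hcube : ∀ m, se3hat (-(ω m ⨯₃ q m)) (ω m) ^ 3 = -se3hat (-(ω m ⨯₃ q m)) (ω m) :=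
    fun m => se3hat_pow_three (hunit m) (by rw [dotProduct_neg, dot_self_cross, neg_zero])
  have hentries := fun r c => list_prod_apply_mem_span_trigMonomialsLE _
    (fun j => exp_smul_apply_mem_span_trigMonomialsLE (hcube j) j) (List.finRange n) r c
  simp only [List.count_finRange] at hentries
  refine ⟨hentries, fun X r c => ?_⟩
  exact transpose_mul_mul_apply_mem_span_trigMonomialsLE hentries hentries X r c
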